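/- Let $I$ be a compact interval, $\mathcal{F} = (f_x)_{x\in[0,1]}$ an admissible family, and $\mathcal{T}$ a finite set of continuous strictly monotone functions on $I$ such that for every $x \in [0,1]$ there exist $l_x, u_x \in \mathcal{T}$ with $\mathscr{A}_{l_x} \le \mathscr{A}_{f_x} \le \mathscr{A}_{u_x}$ (pointwise on $\mathcal{P}(I)$). Then there exists a uniquely determined $\mathbf{A}_\mathcal{F}$-invariant mean $K_\mathcal{F} : \mathcal{P}(I) \to I$. -/

import Mathlib

open MeasureTheory Set Filter Topology

noncomputable section

/-- The topological support of a Borel measure on `ℝ`. -/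
def msupp (mu : Measure ℝ) : Set ℝ := {x | ∀ ε > 0, 0 < mu (Metric.ball x ε)}

/-- Infimum of the support. -/
def suppInf (mu : Measure ℝ) : ℝ := sInf (msupp mu)

/-- Supremum of the support. -/
def suppSup (mu : Measure ℝ) : ℝ := sSup (msupp mu)

/-- `γ(P) = [inf supp P, sup supp P]`. -/
def gammaSet (mu : Measure ℝ) : Set ℝ := Icc (suppInf mu) (suppSup mu)

/-- `|γ(P)|`, the diameter of the support. -/
def gammaLen (mu : Measure ℝ) : ℝ := suppSup mu - suppInf mu

/-- `P ∈ 𝒫(I)`: a compactly supported Borel probability measure concentrated on `I`. -/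
def IsCSP (I : Set ℝ) (mu : Measure ℝ) : Prop :=
  IsProbabilityMeasure mu ∧ mu Iᶜ = 0 ∧ IsCompact (closure (msupp mu))

/-- `f ∈ CM(I)`: continuous and strictly monotone on `I`. -/
def CM (f : ℝ → ℝ) (I : Set ℝ) : Prop :=
  ContinuousOn f I ∧ (StrictMonoOn f I ∨ StrictAntiOn f I)

/-- The integral quasiarithmetic mean `𝒜_f(P) = f⁻¹(∫ f dP)` (inverse taken on `I`). -/
def QAM (f : ℝ → ℝ) (I : Set ℝ) (mu : Measure ℝ) : ℝ :=
  Function.invFunOn f I (∫ t, f t ∂mu)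

/-- The Lebesgue σ-algebra on `ℝ` (completion of the Borel σ-algebra w.r.t. Lebesgue measure). -/
def Leb : MeasurableSpace ℝ where
  MeasurableSet' s := NullMeasurableSet s (volume : Measure ℝ)
  measurableSet_empty := MeasurableSet.empty.nullMeasurableSet
  measurableSet_compl := fun _ hs => hs.compl
  measurableSet_iUnion := fun _ hf => NullMeasurableSet.iUnion hf

/-- An admissible family `(f_x)_{x∈[0,1]}`: each `f_x` continuous and strictly monotone on `I`,
and `(t,x) ↦ f_x(t)` measurable w.r.t. the product of the Borel σ-algebra and the
Lebesgue σ-algebra. -/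
def Admissible (F : ℝ → ℝ → ℝ) (I : Set ℝ) : Prop :=
  (∀ x ∈ Icc (0:ℝ) 1, CM (F x) I) ∧
  Measurable[(inferInstance : MeasurableSpace ℝ).prod Leb] (fun p : ℝ × ℝ => F p.2 p.1)

/-- `𝐀_𝓕(P)`: the distribution of `x ↦ 𝒜_{f_x}(P)` under Lebesgue measure on `[0,1]`. -/
def AF (F : ℝ → ℝ → ℝ) (I : Set ℝ) (mu : Measure ℝ) : Measure ℝ :=
  Measure.map (fun x => QAM (F x) I mu) ((volume : Measure ℝ).restrict (Icc 0 1))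

/-- Iterates of `𝐀_𝓕`. -/
def AFiter (F : ℝ → ℝ → ℝ) (I : Set ℝ) (n : ℕ) (mu : Measure ℝ) : Measure ℝ :=
  (AF F I)^[n] mu

/-- A mean on `𝒫(I)`: `M(P) ∈ γ(P)`. -/
def IsMean (I : Set ℝ) (M : Measure ℝ → ℝ) : Prop :=
  ∀ mu : Measure ℝ, IsCSP I mu → M mu ∈ gammaSet mu

/-- `M` is `𝐀_𝓕`-invariant: `M ∘ 𝐀_𝓕 = M` on `𝒫(I)`. -/
def IsInvariantMean (F : ℝ → ℝ → ℝ) (I : Set ℝ) (M : Measure ℝ → ℝ) : Prop :=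
  ∀ mu : Measure ℝ, IsCSP I mu → M (AF F I mu) = M mu

/-- The lower invariant mean `𝓛_𝓕`. -/
def LF (F : ℝ → ℝ → ℝ) (I : Set ℝ) (mu : Measure ℝ) : ℝ :=
  ⨆ n, suppInf (AFiter F I n mu)

/-- The upper invariant mean `𝓤_𝓕`. -/
def UF (F : ℝ → ℝ → ℝ) (I : Set ℝ) (mu : Measure ℝ) : ℝ :=
  ⨅ n, suppSup (AFiter F I n mu)

/-- Variance of a measure on `ℝ`. -/
def Var (mu : Measure ℝ) : ℝ := (∫ x, x ^ 2 ∂mu) - (∫ x, x ∂mu) ^ 2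

/-- The two-point measure `θ·δ_x + (1-θ)·δ_y`. -/
def twoPt (x y θ : ℝ) : Measure ℝ :=
  ENNReal.ofReal θ • Measure.dirac x + ENNReal.ofReal (1 - θ) • Measure.dirac y

/-!
Every quasiarithmetic mean `𝒜_f(P)` lies in `γ(P)`, so `𝐀_𝓕` maps `𝒫(I)` into itself, the
intervals `γ(𝐀_𝓕ⁿ P)` are nested, and an invariant mean satisfies
`K(P) = K(𝐀_𝓕ⁿ P) ∈ γ(𝐀_𝓕ⁿ P)` for every `n`. These intervals shrink to a point: if
`|γ(P)| ≥ L`, then `P` gives mass at most `1/2` to one half of `γ(P)`, which pushes every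
`𝒜_l(P)`, `l ∈ 𝒯`, away from the corresponding endpoint of `γ(P)` by some `ρ(L) > 0`
(uniform continuity and uniform strict monotonicity of the finitely many `l ∈ 𝒯`); the
bracketing `𝒜_{l_x} ≤ 𝒜_{f_x} ≤ 𝒜_{u_x}` transfers this to all `𝒜_{f_x}(P)`, so
`|γ(𝐀_𝓕 P)| ≤ |γ(P)| - ρ(L)`. Hence the only candidate is the common point
`𝓛_𝓕(P) = supₙ inf γ(𝐀_𝓕ⁿ P)`, and it is invariant because `γ(𝐀_𝓕ⁿ (𝐀_𝓕 P)) = γ(𝐀_𝓕ⁿ⁺¹ P)`.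
-/

theorem msupp_eq_support (mu : Measure ℝ) : msupp mu = mu.support := by
  ext x
  exact Metric.nhds_basis_ball.mem_measureSupport.symm

namespace IsCSP

variable {a b c d : ℝ} {mu : Measure ℝ}

theorem of_measure_compl (hmu : IsProbabilityMeasure mu) (h : mu (Icc c d)ᶜ = 0) :
    IsCSP (Icc c d) mu := by
  refine ⟨hmu, h, (isCompact_Icc (a := c) (b := d)).of_isClosed_subset isClosed_closure ?_⟩
  rw [isClosed_Icc.closure_subset_iff, msupp_eq_support]
  exact Measure.support_subset_of_isClosed isClosed_Icc (mem_ae_iff.2 h)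

theorem msupp_subset (hmu : IsCSP (Icc a b) mu) : msupp mu ⊆ Icc a b := by
  rw [msupp_eq_support]
  exact Measure.support_subset_of_isClosed isClosed_Icc (mem_ae_iff.2 hmu.2.1)

theorem msupp_nonempty (hmu : IsCSP (Icc a b) mu) : (msupp mu).Nonempty := by
  have := hmu.1
  rw [msupp_eq_support]
  exact Measure.nonempty_support (IsProbabilityMeasure.ne_zero mu)

theorem suppInf_le_suppSup (hmu : IsCSP (Icc a b) mu) : suppInf mu ≤ suppSup mu :=
  csInf_le_csSup hmu.msupp_nonempty (bddBelow_Icc.mono hmu.msupp_subset)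
    (bddAbove_Icc.mono hmu.msupp_subset)

theorem gammaSet_subset (hmu : IsCSP (Icc a b) mu) : gammaSet mu ⊆ Icc a b :=
  Icc_subset_Icc (le_csInf hmu.msupp_nonempty fun _ ht => (hmu.msupp_subset ht).1)
    (csSup_le hmu.msupp_nonempty fun _ ht => (hmu.msupp_subset ht).2)

theorem gammaLen_le (hmu : IsCSP (Icc a b) mu) : gammaLen mu ≤ b - a :=
  have h := (Icc_subset_Icc_iff hmu.suppInf_le_suppSup).1 hmu.gammaSet_subset
  sub_le_sub h.2 h.1

theorem ae_mem_gammaSet (hmu : IsCSP (Icc a b) mu) : ∀ᵐ t ∂mu, t ∈ gammaSet mu := by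
  have hsupp : msupp mu ∈ ae mu := msupp_eq_support mu ▸ Measure.support_mem_ae
  refine mem_of_superset hsupp fun t ht => ?_
  exact ⟨csInf_le (bddBelow_Icc.mono hmu.msupp_subset) ht,
    le_csSup (bddAbove_Icc.mono hmu.msupp_subset) ht⟩

theorem integrable (hmu : IsCSP (Icc a b) mu) {f : ℝ → ℝ} (hf : ContinuousOn f (Icc a b)) :
    Integrable f mu := by
  have := hmu.1
  rw [← Measure.restrict_eq_self_of_ae_mem (mem_ae_iff.2 hmu.2.1)]
  exact hf.integrableOn_compact isCompact_Icc

end IsCSP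

section QAM

variable {a b : ℝ} {mu : Measure ℝ} {f : ℝ → ℝ}

theorem CM.injOn {I : Set ℝ} (hf : CM f I) : InjOn f I :=
  hf.2.elim StrictMonoOn.injOn StrictAntiOn.injOn

theorem QAM_eq_of_apply_eq {I : Set ℝ} (hf : InjOn f I) {q : ℝ} (hq : q ∈ I)
    (h : f q = ∫ t, f t ∂mu) : QAM f I mu = q :=
  hf (Function.invFunOn_mem ⟨q, hq, h⟩) hq ((Function.invFunOn_eq ⟨q, hq, h⟩).trans h.symm)

theorem integral_mem_image_gammaSet (hmu : IsCSP (Icc a b) mu)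
    (hf : ContinuousOn f (Icc a b)) : ∫ t, f t ∂mu ∈ f '' gammaSet mu := by
  have := hmu.1
  have himage : f '' gammaSet mu = Icc _ _ :=
    (hf.mono hmu.gammaSet_subset).image_Icc hmu.suppInf_le_suppSup
  exact (himage ▸ convex_Icc _ _ : Convex ℝ _).integral_mem (himage ▸ isClosed_Icc)
    (hmu.ae_mem_gammaSet.mono fun t ht => mem_image_of_mem f ht) (hmu.integrable hf)

theorem QAM_mem_gammaSet_and_apply (hmu : IsCSP (Icc a b) mu) (hf : CM f (Icc a b)) :
    QAM f (Icc a b) mu ∈ gammaSet mu ∧ f (QAM f (Icc a b) mu) = ∫ t, f t ∂mu := by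
  obtain ⟨q, hq, hfq⟩ := integral_mem_image_gammaSet hmu hf.1
  rw [QAM_eq_of_apply_eq hf.injOn (hmu.gammaSet_subset hq) hfq]
  exact ⟨hq, hfq⟩

theorem QAM_mem_gammaSet (hmu : IsCSP (Icc a b) mu) (hf : CM f (Icc a b)) :
    QAM f (Icc a b) mu ∈ gammaSet mu :=
  (QAM_mem_gammaSet_and_apply hmu hf).1

theorem apply_QAM (hmu : IsCSP (Icc a b) mu) (hf : CM f (Icc a b)) :
    f (QAM f (Icc a b) mu) = ∫ t, f t ∂mu :=
  (QAM_mem_gammaSet_and_apply hmu hf).2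

theorem QAM_neg (hmu : IsCSP (Icc a b) mu) (hf : CM f (Icc a b)) :
    QAM (fun t => -f t) (Icc a b) mu = QAM f (Icc a b) mu :=
  QAM_eq_of_apply_eq (neg_injective.comp_injOn hf.injOn)
    (hmu.gammaSet_subset (QAM_mem_gammaSet hmu hf)) (by
      show -f _ = ∫ t, -f t ∂mu
      rw [integral_neg, apply_QAM hmu hf])

end QAM

section Measurability

variable {a b : ℝ} {β : Type*} {mβ : MeasurableSpace β}

theorem measurable_of_strictMonoOn_apply_eq {G : β → ℝ → ℝ} {A c : β → ℝ}
    (hG : ∀ x, StrictMonoOn (G x) (Icc a b) ∨ StrictAntiOn (G x) (Icc a b))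
    (hGm : ∀ t, Measurable fun x => G x t) (hc : Measurable c)
    (hA : ∀ x, A x ∈ Icc a b) (hAc : ∀ x, G x (A x) = c x) : Measurable A := by
  refine measurable_of_Iic fun s => ?_
  rcases lt_or_ge s a with hsa | has
  · convert MeasurableSet.empty
    ext x
    simpa using hsa.trans_le (hA x).1
  rcases le_or_gt b s with hbs | hsb
  · convert MeasurableSet.univ
    ext x
    simpa using (hA x).2.trans hbs
  have hs : s ∈ Icc a b := ⟨has, hsb.le⟩
  have ha : a ∈ Icc a b := left_mem_Icc.2 (has.trans hsb.le)
  have hb : b ∈ Icc a b := right_mem_Icc.2 (has.trans hsb.le)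
  have hlevel : A ⁻¹' Iic s = {x | G x a < G x b ∧ c x ≤ G x s} ∪
      {x | G x b < G x a ∧ G x s ≤ c x} := by
    ext x
    simp only [mem_preimage, mem_Iic, mem_union, mem_ofPred_eq, ← hAc x]
    rcases hG x with h | h
    · have hab := h ha hb (has.trans_lt hsb)
      simp [h.le_iff_le (hA x) hs, hab, hab.not_gt]
    · have hab := h ha hb (has.trans_lt hsb)
      simp [h.le_iff_ge hs (hA x), hab, hab.not_gt]
  rw [hlevel]
  exact ((measurableSet_lt (hGm a) (hGm b)).inter (measurableSet_le hc (hGm s))).union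
    ((measurableSet_lt (hGm b) (hGm a)).inter (measurableSet_le (hGm s) hc))

theorem measurable_QAM {mu : Measure ℝ} (hmu : IsCSP (Icc a b) mu) {G : β → ℝ → ℝ}
    (hG : ∀ x, CM (G x) (Icc a b)) (hGm : Measurable fun p : ℝ × β => G p.2 p.1) :
    Measurable fun x => QAM (G x) (Icc a b) mu :=
  have := hmu.1
  measurable_of_strictMonoOn_apply_eq (fun x => (hG x).2) (fun _ => hGm.comp measurable_prodMk_left)
    hGm.stronglyMeasurable.integral_prod_left'.measurable
    (fun x => hmu.gammaSet_subset (QAM_mem_gammaSet hmu (hG x))) fun x => apply_QAM hmu (hG x)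

end Measurability

section AF

variable {a b : ℝ} {mu : Measure ℝ} {F : ℝ → ℝ → ℝ}

theorem aemeasurable_QAM_family (hF : Admissible F (Icc a b)) (hmu : IsCSP (Icc a b) mu) :
    AEMeasurable (fun x => QAM (F x) (Icc a b) mu) (volume.restrict (Icc (0:ℝ) 1)) := by
  -- Nothing is known about `F x` outside `[0,1]`; replacing it by `id` there makes `G x` `CM`.
  let G : ℝ → ℝ → ℝ := fun x t => if x ∈ Icc (0:ℝ) 1 then F x t else t
  have hGF : ∀ x ∈ Icc (0:ℝ) 1, G x = F x := fun x hx => funext fun _ => if_pos hx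
  have hG : ∀ x, CM (G x) (Icc a b) := by
    intro x
    by_cases hx : x ∈ Icc (0:ℝ) 1
    · exact hGF x hx ▸ hF.1 x hx
    · have hGid : G x = id := funext fun _ => if_neg hx
      exact hGid ▸ ⟨continuousOn_id, Or.inl strictMonoOn_id⟩
  have hIcc : MeasurableSet[Leb] (Icc (0:ℝ) 1) := measurableSet_Icc.nullMeasurableSet
  have hGm : Measurable[(inferInstance : MeasurableSpace ℝ).prod Leb]
      (fun p : ℝ × ℝ => G p.2 p.1) :=
    Measurable.ite ((@measurable_snd ℝ ℝ _ Leb) hIcc) hF.2 (@measurable_fst ℝ ℝ _ Leb)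
  have hA : Measurable[Leb] fun x => QAM (G x) (Icc a b) mu :=
    measurable_QAM (mβ := Leb) hmu hG hGm
  refine (NullMeasurable.aemeasurable fun s hs => hA hs).restrict.congr ?_
  filter_upwards [ae_restrict_mem measurableSet_Icc] with x hx
  rw [hGF x hx]

theorem isCSP_AF_of_forall_mem (hF : Admissible F (Icc a b)) (hmu : IsCSP (Icc a b) mu)
    {c d : ℝ} (h : ∀ x ∈ Icc (0:ℝ) 1, QAM (F x) (Icc a b) mu ∈ Icc c d) :
    IsCSP (Icc c d) (AF F (Icc a b) mu) := by
  have hA := aemeasurable_QAM_family hF hmu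
  have : IsProbabilityMeasure (volume.restrict (Icc (0:ℝ) 1)) := ⟨by simp⟩
  refine .of_measure_compl (Measure.isProbabilityMeasure_map hA) ?_
  rw [AF, Measure.map_apply_of_aemeasurable hA measurableSet_Icc.compl,
    Measure.restrict_apply' measurableSet_Icc]
  convert measure_empty (μ := volume)
  ext x
  simp only [mem_inter_iff, mem_preimage, mem_compl_iff, mem_empty_iff_false, iff_false, not_and]
  exact fun hc hx => hc (h x hx)

theorem isCSP_AF (hF : Admissible F (Icc a b)) (hmu : IsCSP (Icc a b) mu) :
    IsCSP (Icc a b) (AF F (Icc a b) mu) :=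
  isCSP_AF_of_forall_mem hF hmu fun x hx =>
    hmu.gammaSet_subset (QAM_mem_gammaSet hmu (hF.1 x hx))

theorem gammaSet_AF_subset (hF : Admissible F (Icc a b)) (hmu : IsCSP (Icc a b) mu) :
    gammaSet (AF F (Icc a b) mu) ⊆ gammaSet mu :=
  (isCSP_AF_of_forall_mem hF hmu fun x hx => QAM_mem_gammaSet hmu (hF.1 x hx)).gammaSet_subset

theorem AFiter_succ (n : ℕ) :
    AFiter F (Icc a b) (n + 1) mu = AF F (Icc a b) (AFiter F (Icc a b) n mu) :=
  Function.iterate_succ_apply' _ _ _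

theorem AFiter_succ' (n : ℕ) :
    AFiter F (Icc a b) (n + 1) mu = AFiter F (Icc a b) n (AF F (Icc a b) mu) :=
  Function.iterate_succ_apply _ _ _

theorem isCSP_AFiter (hF : Admissible F (Icc a b)) (hmu : IsCSP (Icc a b) mu) (n : ℕ) :
    IsCSP (Icc a b) (AFiter F (Icc a b) n mu) := by
  induction n with
  | zero => exact hmu
  | succ n ih => exact AFiter_succ (mu := mu) n ▸ isCSP_AF hF ih

theorem antitone_gammaSet_AFiter (hF : Admissible F (Icc a b)) (hmu : IsCSP (Icc a b) mu) :
    Antitone fun n => gammaSet (AFiter F (Icc a b) n mu) :=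
  antitone_nat_of_succ_le fun n => AFiter_succ (mu := mu) n ▸
    gammaSet_AF_subset hF (isCSP_AFiter hF hmu n)

end AF

section Contraction

variable {a b : ℝ} {f : ℝ → ℝ}

theorem half_add_le_integral {α : Type*} [MeasurableSpace α] {μ : Measure α}
    [IsProbabilityMeasure μ] {g : α → ℝ} (hg : Integrable g μ) {s : Set α}
    (hs : MeasurableSet s) (hμs : μ.real s ≤ 1 / 2) {u v : ℝ} (huv : u ≤ v)
    (hu : ∀ᵐ t ∂μ, u ≤ g t) (hv : ∀ᵐ t ∂μ, t ∉ s → v ≤ g t) :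
    (u + v) / 2 ≤ ∫ t, g t ∂μ := by
  have hstep : ∀ᵐ t ∂μ, v + s.indicator (fun _ => u - v) t ≤ g t := by
    filter_upwards [hu, hv] with t hut hvt
    by_cases ht : t ∈ s
    · rw [indicator_of_mem ht]
      linarith
    · rw [indicator_of_notMem ht, add_zero]
      exact hvt ht
  have hint := integral_mono_ae (f := fun t => v + s.indicator (fun _ => u - v) t)
    ((integrable_const v).add ((integrable_const _).indicator hs)) hg hstep
  rw [integral_add (integrable_const v) ((integrable_const _).indicator hs), integral_const,
    integral_indicator_const _ hs] at hint
  simp only [probReal_univ, smul_eq_mul] at hint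
  nlinarith [mul_nonneg (sub_nonneg.2 hμs) (sub_nonneg.2 huv)]

theorem StrictMonoOn.exists_pos_forall_add_le (hf : StrictMonoOn f (Icc a b))
    (hc : ContinuousOn f (Icc a b)) {δ : ℝ} (hδ : 0 < δ) :
    ∃ η > 0, ∀ x ∈ Icc a b, ∀ y ∈ Icc a b, x + δ ≤ y → f x + η ≤ f y := by
  let S : Set (ℝ × ℝ) := (Icc a b ×ˢ Icc a b) ∩ {p | p.1 + δ ≤ p.2}
  have hS : IsCompact S := (isCompact_Icc.prod isCompact_Icc).inter_right
    (isClosed_le (continuous_fst.add continuous_const) continuous_snd)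
  have hcS : ContinuousOn (fun p : ℝ × ℝ => f p.2 - f p.1) S :=
    (hc.comp continuous_snd.continuousOn fun p hp => hp.1.2).sub
      (hc.comp continuous_fst.continuousOn fun p hp => hp.1.1)
  obtain ⟨η, hη, hle⟩ := hS.exists_forall_le' hcS fun p hp =>
    sub_pos.2 (hf hp.1.1 hp.1.2 (by linarith [show p.1 + δ ≤ p.2 from hp.2]))
  exact ⟨η, hη, fun x hx y hy hxy => by linarith [hle (x, y) ⟨⟨hx, hy⟩, hxy⟩]⟩

theorem MonotoneOn.exists_pos_forall_add_le (hf : MonotoneOn f (Icc a b))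
    (hc : ContinuousOn f (Icc a b)) {η : ℝ} (hη : 0 < η) :
    ∃ ρ > 0, ∀ x ∈ Icc a b, ∀ y ∈ Icc a b, f x + η ≤ f y → x + ρ ≤ y := by
  obtain ⟨ρ, hρ, hcont⟩ := Metric.uniformContinuousOn_iff.1
    (isCompact_Icc.uniformContinuousOn_of_continuous hc) η hη
  refine ⟨ρ, hρ, fun x hx y hy hxy => ?_⟩
  by_contra! hyx
  rcases le_or_gt x y with hle | hlt
  · have := hcont y hy x hx (by rw [Real.dist_eq, abs_of_nonneg (by linarith)]; linarith)
    rw [Real.dist_eq, abs_lt] at this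
    linarith
  · linarith [hf hy hx hlt.le]

theorem StrictMonoOn.exists_pos_QAM_gap (hf : StrictMonoOn f (Icc a b))
    (hc : ContinuousOn f (Icc a b)) {L : ℝ} (hL : 0 < L) :
    ∃ ρ > 0, ∀ mu : Measure ℝ, IsCSP (Icc a b) mu → L ≤ gammaLen mu →
      (mu.real (Iic ((suppInf mu + suppSup mu) / 2)) ≤ 1 / 2 →
        suppInf mu + ρ ≤ QAM f (Icc a b) mu) ∧
      (mu.real (Ioi ((suppInf mu + suppSup mu) / 2)) ≤ 1 / 2 →
        QAM f (Icc a b) mu + ρ ≤ suppSup mu) := by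
  obtain ⟨η, hη, hgap⟩ := hf.exists_pos_forall_add_le hc (half_pos hL)
  obtain ⟨ρ, hρ, hsep⟩ := hf.monotoneOn.exists_pos_forall_add_le hc (half_pos hη)
  refine ⟨ρ, hρ, fun mu hmu hlen => ?_⟩
  have := hmu.1
  have hCM : CM f (Icc a b) := ⟨hc, Or.inl hf⟩
  set α := suppInf mu
  set β := suppSup mu
  set m := (α + β) / 2 with hm
  have hLαβ : L ≤ β - α := hlen
  have hαβ : α ≤ β := hmu.suppInf_le_suppSup
  have hαI : α ∈ Icc a b := hmu.gammaSet_subset ⟨le_rfl, hαβ⟩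
  have hβI : β ∈ Icc a b := hmu.gammaSet_subset ⟨hαβ, le_rfl⟩
  have hmI : m ∈ Icc a b := hmu.gammaSet_subset ⟨(by linarith : α ≤ m), (by linarith : m ≤ β)⟩
  have hqI := hmu.gammaSet_subset (QAM_mem_gammaSet hmu hCM)
  have hq := apply_QAM hmu hCM
  have hαm : f α + η ≤ f m := hgap α hαI m hmI (by linarith)
  have hmβ : f m + η ≤ f β := hgap m hmI β hβI (by linarith)
  have hae : ∀ᵐ t ∂mu, t ∈ Icc α β ∧ t ∈ Icc a b :=
    hmu.ae_mem_gammaSet.mono fun t ht => ⟨ht, hmu.gammaSet_subset ht⟩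
  constructor
  · intro hθ
    have := half_add_le_integral (hmu.integrable hc) measurableSet_Iic hθ (by linarith)
      (hae.mono fun t ht => hf.monotoneOn hαI ht.2 ht.1.1)
      (hae.mono fun t ht htm => hf.monotoneOn hmI ht.2 (not_le.1 htm).le)
    exact hsep α hαI _ hqI (by linarith)
  · intro hθ
    have := half_add_le_integral (g := fun t => -f t) (hmu.integrable hc).neg measurableSet_Ioi hθ
      (u := -f β) (v := -f m) (by linarith)
      (hae.mono fun t ht => neg_le_neg (hf.monotoneOn ht.2 hβI ht.1.2))
      (hae.mono fun t ht htm => neg_le_neg (hf.monotoneOn ht.2 hmI (not_lt.1 htm)))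
    rw [integral_neg] at this
    exact hsep _ hqI β hβI (by linarith)

theorem CM.exists_pos_QAM_gap (hf : CM f (Icc a b)) {L : ℝ} (hL : 0 < L) :
    ∃ ρ > 0, ∀ mu : Measure ℝ, IsCSP (Icc a b) mu → L ≤ gammaLen mu →
      (mu.real (Iic ((suppInf mu + suppSup mu) / 2)) ≤ 1 / 2 →
        suppInf mu + ρ ≤ QAM f (Icc a b) mu) ∧
      (mu.real (Ioi ((suppInf mu + suppSup mu) / 2)) ≤ 1 / 2 →
        QAM f (Icc a b) mu + ρ ≤ suppSup mu) := by
  obtain ⟨hc, hmono | hanti⟩ := hf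
  · exact hmono.exists_pos_QAM_gap hc hL
  · obtain ⟨ρ, hρ, hgap⟩ := hanti.neg.exists_pos_QAM_gap hc.neg hL
    refine ⟨ρ, hρ, fun mu hmu hlen => ?_⟩
    rw [← QAM_neg hmu ⟨hc, Or.inr hanti⟩]
    exact hgap mu hmu hlen

end Contraction

def IsBracketedBy (F : ℝ → ℝ → ℝ) (I : Set ℝ) (T : Finset (ℝ → ℝ)) : Prop :=
  ∀ x ∈ Icc (0:ℝ) 1, ∃ l ∈ T, ∃ u ∈ T, ∀ mu : Measure ℝ, IsCSP I mu →
    QAM l I mu ≤ QAM (F x) I mu ∧ QAM (F x) I mu ≤ QAM u I mu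

section InvariantMean

variable {a b : ℝ} {mu : Measure ℝ} {F : ℝ → ℝ → ℝ} {T : Finset (ℝ → ℝ)}

theorem exists_pos_gammaLen_AF_add_le (hF : Admissible F (Icc a b))
    (hT : ∀ f ∈ T, CM f (Icc a b)) (hbd : IsBracketedBy F (Icc a b) T) {L : ℝ} (hL : 0 < L) :
    ∃ ρ > 0, ∀ mu : Measure ℝ, IsCSP (Icc a b) mu → L ≤ gammaLen mu →
      gammaLen (AF F (Icc a b) mu) + ρ ≤ gammaLen mu := by
  obtain ⟨l₀, hl₀, -⟩ := hbd 0 ⟨le_rfl, zero_le_one⟩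
  choose! ρf hρf hgap using fun f (hf : f ∈ T) => (hT f hf).exists_pos_QAM_gap hL
  obtain ⟨ρ, hρpos, hρ⟩ : ∃ ρ > 0, ∀ f ∈ T, ρ ≤ ρf f :=
    ⟨T.inf' ⟨l₀, hl₀⟩ ρf, (Finset.lt_inf'_iff _).2 hρf, fun f hf => Finset.inf'_le _ hf⟩
  refine ⟨ρ, hρpos, fun mu hmu hlen => ?_⟩
  have hγ : ∀ x ∈ Icc (0:ℝ) 1, QAM (F x) (Icc a b) mu ∈ gammaSet mu :=
    fun x hx => QAM_mem_gammaSet hmu (hF.1 x hx)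
  have := hmu.1
  have hhalf : mu.real (Iic ((suppInf mu + suppSup mu) / 2)) ≤ 1 / 2 ∨
      mu.real (Ioi ((suppInf mu + suppSup mu) / 2)) ≤ 1 / 2 := by
    rw [← compl_Iic, probReal_compl_eq_one_sub measurableSet_Iic]
    by_contra! h
    linarith [h.1, h.2]
  rcases hhalf with h | h
  · have hAF := isCSP_AF_of_forall_mem hF hmu (c := suppInf mu + ρ) fun x hx => by
      obtain ⟨l, hl, _, _, hlu⟩ := hbd x hx
      exact ⟨by linarith [(hgap l hl mu hmu hlen).1 h, hρ l hl, (hlu mu hmu).1], (hγ x hx).2⟩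
    have := hAF.gammaLen_le
    simp only [gammaLen] at this ⊢
    linarith
  · have hAF := isCSP_AF_of_forall_mem hF hmu (d := suppSup mu - ρ) fun x hx => by
      obtain ⟨_, _, u, hu, hlu⟩ := hbd x hx
      exact ⟨(hγ x hx).1, by linarith [(hgap u hu mu hmu hlen).2 h, hρ u hu, (hlu mu hmu).2]⟩
    have := hAF.gammaLen_le
    simp only [gammaLen] at this ⊢
    linarith

theorem exists_gammaLen_AFiter_lt (hF : Admissible F (Icc a b))
    (hT : ∀ f ∈ T, CM f (Icc a b)) (hbd : IsBracketedBy F (Icc a b) T)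
    (hmu : IsCSP (Icc a b) mu) {ε : ℝ} (hε : 0 < ε) :
    ∃ n, gammaLen (AFiter F (Icc a b) n mu) < ε := by
  by_contra! hge
  obtain ⟨ρ, hρ, hstep⟩ := exists_pos_gammaLen_AF_add_le hF hT hbd hε
  have hdecay : ∀ n : ℕ, gammaLen (AFiter F (Icc a b) n mu) + n * ρ ≤ gammaLen mu := by
    intro n
    induction n with
    | zero => simp [AFiter]
    | succ n ih =>
      have := hstep _ (isCSP_AFiter hF hmu n) (hge n)
      rw [← AFiter_succ] at this
      push_cast
      linarith
  obtain ⟨n, hn⟩ := exists_nat_gt (gammaLen mu / ρ)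
  rw [div_lt_iff₀ hρ] at hn
  linarith [hdecay n, hge n]

theorem eq_of_forall_mem_gammaSet_AFiter (hF : Admissible F (Icc a b))
    (hT : ∀ f ∈ T, CM f (Icc a b)) (hbd : IsBracketedBy F (Icc a b) T)
    (hmu : IsCSP (Icc a b) mu) {x y : ℝ} (hx : ∀ n, x ∈ gammaSet (AFiter F (Icc a b) n mu))
    (hy : ∀ n, y ∈ gammaSet (AFiter F (Icc a b) n mu)) : x = y :=
  eq_of_forall_dist_le fun _ hε =>
    have ⟨n, hn⟩ := exists_gammaLen_AFiter_lt hF hT hbd hmu hε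
    (Real.dist_le_of_mem_Icc (hx n) (hy n)).trans hn.le

theorem LF_mem_gammaSet_AFiter (hF : Admissible F (Icc a b)) (hmu : IsCSP (Icc a b) mu)
    (n : ℕ) : LF F (Icc a b) mu ∈ gammaSet (AFiter F (Icc a b) n mu) :=
  mem_iInter.1 (ciSup_mem_iInter_Icc_of_antitone_Icc (antitone_gammaSet_AFiter hF hmu)
    fun n => (isCSP_AFiter hF hmu n).suppInf_le_suppSup) n

theorem isMean_LF (hF : Admissible F (Icc a b)) : IsMean (Icc a b) (LF F (Icc a b)) :=
  fun _ hmu => LF_mem_gammaSet_AFiter hF hmu 0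

theorem isInvariantMean_LF (hF : Admissible F (Icc a b)) (hT : ∀ f ∈ T, CM f (Icc a b))
    (hbd : IsBracketedBy F (Icc a b) T) : IsInvariantMean F (Icc a b) (LF F (Icc a b)) :=
  fun mu hmu => eq_of_forall_mem_gammaSet_AFiter hF hT hbd hmu
    (fun n => antitone_gammaSet_AFiter hF hmu n.le_succ <| by
      show _ ∈ gammaSet (AFiter F (Icc a b) (n + 1) mu)
      rw [AFiter_succ']
      exact LF_mem_gammaSet_AFiter hF (isCSP_AF hF hmu) n)
    (LF_mem_gammaSet_AFiter hF hmu)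

theorem IsMean.mem_gammaSet_AFiter {K : Measure ℝ → ℝ} (hK : IsMean (Icc a b) K)
    (hKinv : IsInvariantMean F (Icc a b) K) (hF : Admissible F (Icc a b))
    (hmu : IsCSP (Icc a b) mu) (n : ℕ) : K mu ∈ gammaSet (AFiter F (Icc a b) n mu) := by
  have hKn : K (AFiter F (Icc a b) n mu) = K mu := by
    induction n with
    | zero => rfl
    | succ n ih => rw [AFiter_succ, hKinv _ (isCSP_AFiter hF hmu n), ih]
  exact hKn ▸ hK _ (isCSP_AFiter hF hmu n)

end InvariantMean

theorem stmt17_general (a b : ℝ) (F : ℝ → ℝ → ℝ)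
    (hF : Admissible F (Icc a b))
    (T : Finset (ℝ → ℝ)) (hT : ∀ f ∈ T, CM f (Icc a b))
    (hbd : ∀ x ∈ Icc (0:ℝ) 1, ∃ l ∈ T, ∃ u ∈ T, ∀ mu : Measure ℝ, IsCSP (Icc a b) mu →
      QAM l (Icc a b) mu ≤ QAM (F x) (Icc a b) mu ∧
      QAM (F x) (Icc a b) mu ≤ QAM u (Icc a b) mu) :
    ∃ Kmean : Measure ℝ → ℝ,
      (IsMean (Icc a b) Kmean ∧ IsInvariantMean F (Icc a b) Kmean) ∧
      ∀ K' : Measure ℝ → ℝ, IsMean (Icc a b) K' ∧ IsInvariantMean F (Icc a b) K' →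
        ∀ mu : Measure ℝ, IsCSP (Icc a b) mu → K' mu = Kmean mu :=
  ⟨LF F (Icc a b), ⟨isMean_LF hF, isInvariantMean_LF hF hT hbd⟩, fun _ ⟨hK, hKinv⟩ _ hmu =>
    eq_of_forall_mem_gammaSet_AFiter hF hT hbd hmu (hK.mem_gammaSet_AFiter hKinv hF hmu)
      (LF_mem_gammaSet_AFiter hF hmu)⟩

theorem stmt17 (a b : ℝ) (hab : a ≤ b) (F : ℝ → ℝ → ℝ)
    (hF : Admissible F (Icc a b))
    (T : Finset (ℝ → ℝ)) (hT : ∀ f ∈ T, CM f (Icc a b))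
    (hbd : ∀ x ∈ Icc (0:ℝ) 1, ∃ l ∈ T, ∃ u ∈ T, ∀ mu : Measure ℝ, IsCSP (Icc a b) mu →
      QAM l (Icc a b) mu ≤ QAM (F x) (Icc a b) mu ∧
      QAM (F x) (Icc a b) mu ≤ QAM u (Icc a b) mu) :
    ∃ Kmean : Measure ℝ → ℝ,
      (IsMean (Icc a b) Kmean ∧ IsInvariantMean F (Icc a b) Kmean) ∧
      ∀ K' : Measure ℝ → ℝ, IsMean (Icc a b) K' ∧ IsInvariantMean F (Icc a b) K' →
        ∀ mu : Measure ℝ, IsCSP (Icc a b) mu → K' mu = Kmean mu :=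
  stmt17_general a b F hF T hT hbd
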